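/- Let B : H → K be a bounded linear operator with closed range, and let A₁ ∈ L(H)⁺, A₂ ∈ L(K)⁺ be positive semidefinite bounded operators. There exists a bounded operator C : K → H satisfying BCB = B, CBC = C, A₁CB = (CB)*A₁, and A₂BC = (BC)*A₂ if and only if the pairs (A₁, N(B)) and (A₂, R(B)) are compatible, i.e., there exists a bounded projection Q with R(Q) = N(B) and A₁Q = Q*A₁, and a bounded projection P with R(P) = R(B) and A₂P = P*A₂. -/

import Mathlib

/-!
If `C` is a reflexive generalized inverse of `B`, then `CB` and `BC` are idempotents with
`N(CB) = N(B)` and `R(BC) = R(B)`, so `Q = 1 - CB` and `P = BC` witness the two compatibilities;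
being `A`-Hermitian passes from an idempotent `E` to `1 - E`. Conversely, given `Q` and `P`,
`B` maps the closed complement `N(Q)` of `N(B)` bijectively onto the closed range `R(B)`, hence
(open mapping theorem) it has a bounded inverse `D : R(B) → N(Q)`, and `C = D P` satisfies
`CB = 1 - Q` and `BC = P`.
-/

open ContinuousLinearMap

/-- A positive operator `A` and a closed subspace `S` form a compatible pair if there is a
bounded idempotent `Q` with range `S` which is `A`-Hermitian: `AQ = Q*A`. -/
def Compatible {H : Type*} [NormedAddCommGroup H] [InnerProductSpace ℂ H] [CompleteSpace H]
    (A : H →L[ℂ] H) (S : Submodule ℂ H) : Prop :=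
  ∃ Q : H →L[ℂ] H, Q ∘L Q = Q ∧ LinearMap.range (Q : H →ₗ[ℂ] H) = S ∧ A ∘L Q = adjoint Q ∘L A

theorem mul_one_sub_eq_star_one_sub_mul {R : Type*} [Ring R] [StarRing R] {a e : R}
    (h : a * e = star e * a) : a * (1 - e) = star (1 - e) * a := by
  rw [star_sub, star_one, mul_sub, sub_mul, h, mul_one, one_mul]

namespace ContinuousLinearMap

variable {𝕜 E F : Type*} [NontriviallyNormedField 𝕜]
  [NormedAddCommGroup E] [NormedSpace 𝕜 E] [NormedAddCommGroup F] [NormedSpace 𝕜 F]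
  {B : E →L[𝕜] F} {C : F →L[𝕜] E}

theorem isIdempotentElem_comp_of_comp_comp_eq_self (h : B ∘L C ∘L B = B) :
    IsIdempotentElem (C ∘L B) := by
  change C ∘L (B ∘L C ∘L B) = C ∘L B
  rw [h]

theorem isIdempotentElem_comp_of_comp_comp_eq_self' (h : B ∘L C ∘L B = B) :
    IsIdempotentElem (B ∘L C) := by
  change (B ∘L C ∘L B) ∘L C = B ∘L C
  rw [h]

theorem range_one_sub_comp_eq_ker (h : B ∘L C ∘L B = B) : (1 - C ∘L B).range = B.ker := by
  rw [toLinearMap_sub, toLinearMap_one, ← LinearMap.IsIdempotentElem.ker_eq_range_one_sub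
    (isIdempotentElem_comp_of_comp_comp_eq_self h).toLinearMap]
  refine le_antisymm (fun x hx ↦ ?_) (LinearMap.ker_le_ker_comp _ _)
  rw [← h]
  exact LinearMap.ker_le_ker_comp (C ∘L B : E →ₗ[𝕜] E) (B : E →ₗ[𝕜] F) hx

theorem range_comp_eq_range (h : B ∘L C ∘L B = B) : (B ∘L C).range = B.range := by
  refine le_antisymm (LinearMap.range_comp_le_range _ _) ?_
  calc B.range = ((B ∘L C) ∘L B).range := by rw [comp_assoc, h]
    _ ≤ _ := LinearMap.range_comp_le_range _ _

variable [CompleteSpace E] [CompleteSpace F]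

theorem exists_comp_rangeRestrict_eq_one_sub (hB : IsClosed (B.range : Set F))
    {Q : E →L[𝕜] E} (hQ : IsIdempotentElem Q) (hQB : Q.range = B.ker) :
    ∃ D : B.range →L[𝕜] E, D ∘L B.rangeRestrict = 1 - Q ∧ B ∘L D = B.range.subtypeL := by
  have := hB.completeSpace_coe
  have hQQ : ∀ x, Q (Q x) = Q x := fun x ↦ congr($(hQ.eq) x)
  have hsub_mem : ∀ x, x - Q x ∈ Q.ker := fun x ↦ by simp [hQQ]
  have hBQ : ∀ x, B (Q x) = 0 := fun x ↦ (hQB ▸ LinearMap.mem_range_self _ x : Q x ∈ B.ker)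
  let B' : Q.ker →L[𝕜] B.range := B.restrict fun x _ ↦ LinearMap.mem_range_self _ x
  have hB'_sub : ∀ x, B' ⟨x - Q x, hsub_mem x⟩ = B.rangeRestrict x := fun x ↦ by
    ext
    simp [B', hBQ x]
  have hinj : B'.ker = ⊥ := by
    refine LinearMap.ker_eq_bot'.mpr fun ⟨x, hQx⟩ hx ↦ ?_
    have hxQ : x ∈ Q.range := hQB ▸ congr(Subtype.val $hx)
    rw [LinearMap.IsIdempotentElem.mem_range_iff hQ.toLinearMap] at hxQ
    exact Subtype.ext (hxQ.symm.trans hQx)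
  have hsurj : B'.range = ⊤ :=
    LinearMap.range_eq_top.mpr fun ⟨y, x, hx⟩ ↦ ⟨_, (hB'_sub x).trans (Subtype.ext hx)⟩
  let e := ContinuousLinearEquiv.ofBijective B' hinj hsurj
  refine ⟨Q.ker.subtypeL ∘L (e.symm : B.range →L[𝕜] Q.ker), ?_, ?_⟩
  · ext x
    simp [← hB'_sub x, e]
  · ext y
    exact congr(Subtype.val $(e.apply_symm_apply y))

theorem exists_reflexiveInverse_of_isIdempotentElem (hB : IsClosed (B.range : Set F))
    {Q : E →L[𝕜] E} (hQ : IsIdempotentElem Q) (hQB : Q.range = B.ker)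
    {P : F →L[𝕜] F} (hP : IsIdempotentElem P) (hPB : P.range = B.range) :
    ∃ C : F →L[𝕜] E, B ∘L C ∘L B = B ∧ C ∘L B ∘L C = C ∧ C ∘L B = 1 - Q ∧ B ∘L C = P := by
  obtain ⟨D, hDB, hBD⟩ := exists_comp_rangeRestrict_eq_one_sub hB hQ hQB
  have hP_mem : ∀ y, P y ∈ B.range := fun y ↦ hPB ▸ LinearMap.mem_range_self _ y
  have hPB' : P ∘L B = B :=
    coe_inj.mp <| (LinearMap.IsIdempotentElem.comp_eq_right_iff hP.toLinearMap _).mpr hPB.ge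
  set C := D ∘L P.codRestrict _ hP_mem
  have hCB : C ∘L B = 1 - Q := by
    rw [← hDB, comp_assoc]
    congr 1
    ext x
    exact congr($hPB' x)
  have hBC : B ∘L C = P := by
    rw [← comp_assoc, hBD]
    rfl
  have hCP : C ∘L P = C := by
    rw [comp_assoc]
    congr 1
    ext y
    exact congr($(hP.eq) y)
  refine ⟨C, ?_, ?_, hCB, hBC⟩
  · rw [← comp_assoc, hBC, hPB']
  · rw [hBC, hCP]

end ContinuousLinearMap

theorem stmt_2
    {H K : Type*}
    [NormedAddCommGroup H] [InnerProductSpace ℂ H] [CompleteSpace H]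
    [NormedAddCommGroup K] [InnerProductSpace ℂ K] [CompleteSpace K]
    (B : H →L[ℂ] K) (hB : IsClosed (LinearMap.range (B : H →ₗ[ℂ] K) : Set K))
    (A₁ : H →L[ℂ] H)
    (A₂ : K →L[ℂ] K) :
    (∃ C : K →L[ℂ] H,
      B ∘L C ∘L B = B ∧ C ∘L B ∘L C = C ∧
      A₁ ∘L (C ∘L B) = adjoint (C ∘L B) ∘L A₁ ∧
      A₂ ∘L (B ∘L C) = adjoint (B ∘L C) ∘L A₂) ↔
    (Compatible A₁ (LinearMap.ker (B : H →ₗ[ℂ] K)) ∧ Compatible A₂ (LinearMap.range (B : H →ₗ[ℂ] K))) := by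
  constructor
  · rintro ⟨C, hBCB, -, hCB, hBC⟩
    exact ⟨⟨1 - C ∘L B, (isIdempotentElem_comp_of_comp_comp_eq_self hBCB).one_sub.eq,
        range_one_sub_comp_eq_ker hBCB, mul_one_sub_eq_star_one_sub_mul hCB⟩,
      ⟨B ∘L C, (isIdempotentElem_comp_of_comp_comp_eq_self' hBCB).eq, range_comp_eq_range hBCB,
        hBC⟩⟩
  · rintro ⟨⟨Q, hQ, hQB, hAQ⟩, ⟨P, hP, hPB, hAP⟩⟩
    obtain ⟨C, hBCB, hCBC, hCB, hBC⟩ := exists_reflexiveInverse_of_isIdempotentElem hB hQ hQB hP hPB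
    refine ⟨C, hBCB, hCBC, ?_, hBC ▸ hAP⟩
    rw [hCB]
    exact mul_one_sub_eq_star_one_sub_mul hAQ
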